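/- Let (V, H) be normed spaces with V continuously embedded in H, and let {u_Δt} be a family of piecewise-constant-in-time functions u_Δt(t) = u_Δt^n for t ∈ ((n-1)Δt, nΔt], n = 1,…,N, NΔt = T, with values in H. Suppose the numerical dissipation estimate holds: ∑_{n=1}^{N-1} ‖u_Δt^{n+1} - u_Δt^n‖_H² ≤ C. Then for every s with 0 ≤ s < Δt, ‖τ_s τ_{lΔt} u_Δt - τ_{lΔt} u_Δt‖²_{L²(lΔt + s, T; H)} ≤ C s, where τ_h u(t) = u(t-h). -/

import Mathlib

open MeasureTheory Set

/-!
After the change of variables `r = t - lΔt`, the integrand `‖u (r - s) - u r‖²` vanishes unless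
`r - s` and `r` lie in consecutive cells `((n-1)Δt, nΔt]` and `(nΔt, (n+1)Δt]`, which (as
`s < Δt`) happens exactly for `r ∈ (nΔt, nΔt + s]`; there it equals `‖u^{n+1} - u^n‖²`.
So the integrand is dominated by a sum of indicators of intervals of length `s`, weighted by the
squared jumps, and integrating gives `s ∑ ‖u^{n+1} - u^n‖² ≤ C s`.
-/

lemma exists_lt_mem_Ioc_mul {N : ℕ} {Δt r : ℝ} (hΔt : 0 < Δt) (hr : 0 < r) (hrN : r ≤ N * Δt) :
    ∃ n < N, r ∈ Ioc (n * Δt) ((n + 1) * Δt) := by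
  have hpos : 0 < ⌈r / Δt⌉₊ := Nat.ceil_pos.mpr (div_pos hr hΔt)
  obtain ⟨n, hn⟩ := Nat.exists_eq_add_of_le' hpos
  have hlt := Nat.ceil_lt_add_one (div_pos hr hΔt).le
  have hle := Nat.le_ceil (r / Δt)
  have hceilN : ⌈r / Δt⌉₊ ≤ N := Nat.ceil_le.mpr ((div_le_iff₀ hΔt).mpr hrN)
  rw [hn] at hlt hle hceilN
  push_cast at hlt hle
  refine ⟨n, by omega, ?_, ?_⟩
  · have := (lt_div_iff₀ hΔt).mp (by linarith : (n : ℝ) < r / Δt)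
    linarith
  · exact (div_le_iff₀ hΔt).mp hle

lemma norm_sub_sq_le_sum_indicator_jumps {H : Type*} [NormedAddCommGroup H] {N : ℕ}
    {Δt s r : ℝ} {un : ℕ → H} {u : ℝ → H} (hΔt : 0 < Δt)
    (hpc : ∀ n : ℕ, 1 ≤ n → n ≤ N →
      ∀ t ∈ Set.Ioc (((n : ℝ) - 1) * Δt) ((n : ℝ) * Δt), u t = un n)
    (hs0 : 0 ≤ s) (hsΔ : s < Δt) (hsr : s < r) (hrN : r ≤ N * Δt) :
    ‖u (r - s) - u r‖ ^ 2 ≤ ∑ n ∈ Finset.Ico 1 N,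
      (Ioc (n * Δt) (n * Δt + s)).indicator (fun _ => ‖un (n + 1) - un n‖ ^ 2) r := by
  obtain ⟨n, hnN, hrn⟩ := exists_lt_mem_Ioc_mul (N := N) hΔt (by linarith) hrN
  have hur : u r = un (n + 1) := hpc (n + 1) (by omega) hnN r (by push_cast; simpa using hrn)
  have hterms_nonneg : ∀ k ∈ Finset.Ico 1 N, 0 ≤
      (Ioc (k * Δt) (k * Δt + s)).indicator (fun _ => ‖un (k + 1) - un k‖ ^ 2) r :=
    fun k _ => indicator_nonneg (fun _ _ => sq_nonneg _) r
  by_cases hcell : n * Δt < r - s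
  · have hurs : u (r - s) = un (n + 1) :=
      hpc (n + 1) (by omega) hnN (r - s) ⟨by push_cast; linarith, by push_cast; linarith [hrn.2]⟩
    rw [hurs, hur, sub_self, norm_zero, sq, mul_zero]
    exact Finset.sum_nonneg hterms_nonneg
  · -- `r` lies within `s` of the grid point `nΔt`, so `r - s` is in the previous cell
    have hn1 : 1 ≤ n := by
      by_contra! h
      obtain rfl : n = 0 := by omega
      simp only [Nat.cast_zero, zero_mul, not_lt] at hcell
      linarith
    have hurs : u (r - s) = un n := hpc n hn1 hnN.le (r - s) ⟨by linarith [hrn.1], by linarith⟩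
    have hmem : r ∈ Ioc (n * Δt) (n * Δt + s) := ⟨hrn.1, by linarith⟩
    calc ‖u (r - s) - u r‖ ^ 2
        = (Ioc (n * Δt) (n * Δt + s)).indicator (fun _ => ‖un (n + 1) - un n‖ ^ 2) r := by
          rw [indicator_of_mem hmem, hurs, hur, norm_sub_rev]
      _ ≤ _ := Finset.single_le_sum hterms_nonneg (Finset.mem_Ico.mpr ⟨hn1, hnN⟩)

lemma setIntegral_indicator_const_le {α : Type*} [MeasurableSpace α] {μ : Measure α}
    {A B : Set α} (hB : MeasurableSet B) (hμB : μ B ≠ ⊤) {c : ℝ} (hc : 0 ≤ c) :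
    ∫ x in A, B.indicator (fun _ => c) x ∂μ ≤ c * μ.real B := by
  rw [setIntegral_indicator hB, setIntegral_const, smul_eq_mul, mul_comm]
  exact mul_le_mul_of_nonneg_left (measureReal_mono inter_subset_right hμB) hc

/-- Numerical dissipation controls fractional time shifts: for a piecewise constant
(in time) function `u` with values `u^n` on `((n-1)Δt, nΔt]`, if
`∑_{n=1}^{N-1} ‖u^{n+1} - u^n‖² ≤ C` then for `0 ≤ s < Δt`,
`‖τ_s τ_{lΔt} u - τ_{lΔt} u‖²_{L²(lΔt+s, T; H)} ≤ C s`. -/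
theorem dissipation_time_shift_estimate
    {H : Type*} [NormedAddCommGroup H]
    (N l : ℕ) (Δt T s C : ℝ) (un : ℕ → H) (u : ℝ → H)
    (hΔt : 0 < Δt) (hT : (N : ℝ) * Δt = T)
    (hpc : ∀ n : ℕ, 1 ≤ n → n ≤ N →
      ∀ t ∈ Set.Ioc (((n : ℝ) - 1) * Δt) ((n : ℝ) * Δt), u t = un n)
    (hdiss : ∑ n ∈ Finset.Ico 1 N, ‖un (n + 1) - un n‖ ^ 2 ≤ C)
    (hs0 : 0 ≤ s) (hsΔ : s < Δt) (hl : (l : ℝ) * Δt + s ≤ T) :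
    ∫ t in Set.Ioc ((l : ℝ) * Δt + s) T,
        ‖u (t - s - (l : ℝ) * Δt) - u (t - (l : ℝ) * Δt)‖ ^ 2
      ≤ C * s := by
  set L : ℝ := l * Δt
  have hL : 0 ≤ L := by positivity
  set jump : ℕ → ℝ → ℝ := fun n =>
    (Ioc (n * Δt) (n * Δt + s)).indicator (fun _ => ‖un (n + 1) - un n‖ ^ 2)
  have hjump_int : ∀ n ∈ Finset.Ico 1 N, IntegrableOn (jump n) (Ioc s (T - L)) :=
    fun n _ => (integrableOn_const measure_Ioc_lt_top.ne).indicator measurableSet_Ioc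
  calc ∫ t in Ioc (L + s) T, ‖u (t - s - L) - u (t - L)‖ ^ 2
      = ∫ r in Ioc s (T - L), ‖u (r - s) - u r‖ ^ 2 := by
        rw [← intervalIntegral.integral_of_le hl,
          ← intervalIntegral.integral_of_le (by linarith)]
        simpa only [sub_right_comm _ s L, add_sub_cancel_left] using
          intervalIntegral.integral_comp_sub_right (fun r => ‖u (r - s) - u r‖ ^ 2) (a := L + s) L
    _ ≤ ∫ r in Ioc s (T - L), ∑ n ∈ Finset.Ico 1 N, jump n r :=
        setIntegral_mono_of_nonneg (fun _ _ => sq_nonneg _)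
          (fun r hr => norm_sub_sq_le_sum_indicator_jumps hΔt hpc hs0 hsΔ hr.1 (by linarith [hr.2]))
          (integrable_finsetSum _ hjump_int)
    _ = ∑ n ∈ Finset.Ico 1 N, ∫ r in Ioc s (T - L), jump n r := integral_finsetSum _ hjump_int
    _ ≤ ∑ n ∈ Finset.Ico 1 N, ‖un (n + 1) - un n‖ ^ 2 * s := by
        refine Finset.sum_le_sum fun n _ => ?_
        refine (setIntegral_indicator_const_le measurableSet_Ioc measure_Ioc_lt_top.ne
          (sq_nonneg _)).trans_eq ?_
        rw [Real.volume_real_Ioc_of_le (by linarith), add_sub_cancel_left]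
    _ ≤ C * s := by
        rw [← Finset.sum_mul]
        gcongr
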